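/- Let F be a field, n ≥ 1, and let I be a nonzero monomial ideal of F[X_1,...,X_n] such that the quotient F[X_1,...,X_n]/I has finite dimension K ≥ 1 over F. Let G be the minimal monomial generating set of I, i.e., the set of exponent vectors a ∈ ℕⁿ such that the monomial X^a lies in I but X^a/X_i ∉ I for every index i with a_i > 0. Then |G| ≤ (n−1)K + 1. -/

import Mathlib

open MvPolynomial

/-- An ideal of `F[X_1,…,X_n]` is a *monomial ideal* if it is generated by
a set of monomials `X^a = X_1^{a_1} ⋯ X_n^{a_n}`. -/
def IsMonomialIdeal {n : ℕ} {F : Type} [Field F] (I : Ideal (MvPolynomial (Fin n) F)) : Prop :=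
  ∃ S : Set (Fin n →₀ ℕ), I = Ideal.span ((fun a => (monomial a (1 : F))) '' S)


/-- The minimal monomial generating set of a monomial ideal \`I\`, described by exponent
vectors: those \`a\` with \`X^a ∈ I\` such that \`X^a / X_i ∉ I\` for every \`i\` with \`a_i > 0\`. -/
def minGenSet {n : ℕ} {F : Type} [Field F] (I : Ideal (MvPolynomial (Fin n) F)) :
    Set (Fin n →₀ ℕ) :=
  {a | (monomial a (1 : F)) ∈ I ∧
    ∀ i, 0 < a i → (monomial (a - Finsupp.single i 1) (1 : F)) ∉ I}

/-!
The monomials outside `I` (the standard monomials) form a basis of `F[X] / I`, so there are `K`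
of them. Call a minimal generator `a` *axial* if its support lies in `{0}`. Two axial generators
are comparable, hence equal, so there is at most one. Any other generator `a` has `a_i > 0` for
some `i ≠ 0`, and then `a - e_i` is a standard monomial; as `a` is recovered from the pair
`(i, a - e_i)`, there are at most `(n - 1) K` such generators.
-/

section MinimalExponents

variable {σ : Type*}

def minimalExponents (U : Set (σ →₀ ℕ)) : Set (σ →₀ ℕ) :=
  {a | a ∈ U ∧ ∀ i, 0 < a i → a - Finsupp.single i 1 ∉ U}

variable {U : Set (σ →₀ ℕ)}

theorem eq_of_le_of_mem_minimalExponents (hU : IsUpperSet U) {a b : σ →₀ ℕ}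
    (ha : a ∈ minimalExponents U) (hb : b ∈ minimalExponents U) (hab : a ≤ b) : a = b := by
  by_contra hne
  obtain ⟨i, hi⟩ : ∃ i, a i < b i := by
    by_contra! h
    exact hne (le_antisymm hab h)
  refine hb.2 i (by omega) (hU (fun j => ?_) ha.1)
  rcases eq_or_ne j i with rfl | hj
  · simp only [Finsupp.tsub_apply, Finsupp.single_eq_same]
    omega
  · simpa [Finsupp.single_eq_of_ne hj] using hab j

theorem ncard_minimalExponents_le [Finite σ] (hU : IsUpperSet U) (hfin : Uᶜ.Finite) :
    (minimalExponents U).ncard ≤ (Nat.card σ - 1) * Uᶜ.ncard + 1 := by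
  cases isEmpty_or_nonempty σ
  · exact (Set.ncard_le_one_of_subsingleton _).trans (Nat.le_add_left _ _)
  obtain ⟨i₀⟩ := ‹Nonempty σ›
  set axial := {a ∈ minimalExponents U | a.support ⊆ {i₀}}
  set shifts := ({i₀}ᶜ ×ˢ Uᶜ : Set (σ × (σ →₀ ℕ)))
  have h_axial : axial.Subsingleton := by
    have hle : ∀ a ∈ axial, ∀ b ∈ axial, a i₀ ≤ b i₀ → a ≤ b := by
      rintro a ⟨-, ha⟩ b ⟨-, hb⟩ h
      rw [Finsupp.support_subset_singleton] at ha hb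
      rw [ha, hb]
      exact Finsupp.single_le_single.2 h
    intro a ha b hb
    rcases le_total (a i₀) (b i₀) with h | h
    · exact eq_of_le_of_mem_minimalExponents hU ha.1 hb.1 (hle a ha b hb h)
    · exact (eq_of_le_of_mem_minimalExponents hU hb.1 ha.1 (hle b hb a ha h)).symm
  have hcover :
      minimalExponents U ⊆ axial ∪ (fun p => p.2 + Finsupp.single p.1 1) '' shifts := by
    intro a ha
    by_cases has : a.support ⊆ {i₀}
    · exact Or.inl ⟨ha, has⟩
    obtain ⟨i, hi, hi₀⟩ := Finset.not_subset.1 has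
    have hpos : 0 < a i := Nat.pos_of_ne_zero (Finsupp.mem_support_iff.1 hi)
    refine Or.inr ⟨(i, a - Finsupp.single i 1), ⟨by simpa using hi₀, ha.2 i hpos⟩, ?_⟩
    exact tsub_add_cancel_of_le (Finsupp.single_le_iff.2 hpos)
  have hshifts : shifts.Finite := (Set.toFinite _).prod hfin
  calc (minimalExponents U).ncard
      ≤ (axial ∪ (fun p => p.2 + Finsupp.single p.1 1) '' shifts).ncard :=
        Set.ncard_le_ncard hcover (h_axial.finite.union (hshifts.image _))
    _ ≤ axial.ncard + ((fun p => p.2 + Finsupp.single p.1 1) '' shifts).ncard :=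
        Set.ncard_union_le _ _
    _ ≤ 1 + shifts.ncard :=
        add_le_add ((Set.ncard_le_one h_axial.finite).2 fun a ha b hb => h_axial ha hb)
          (Set.ncard_image_le hshifts)
    _ = (Nat.card σ - 1) * Uᶜ.ncard + 1 := by
        rw [Set.ncard_prod, Set.ncard_compl, Set.ncard_singleton, add_comm]

end MinimalExponents

section MonomialIdeals

variable {σ R : Type*}

theorem isUpperSet_setOf_monomial_mem [CommSemiring R] (I : Ideal (MvPolynomial σ R)) :
    IsUpperSet {a | monomial a (1 : R) ∈ I} := by
  intro a b hab ha
  have hb : monomial b (1 : R) = monomial (b - a) 1 * monomial a 1 := by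
    rw [monomial_mul, one_mul, tsub_add_cancel_of_le hab]
  rw [Set.mem_ofPred_eq, hb]
  exact I.mul_mem_left _ ha

theorem restrictScalars_span_monomial_image [CommSemiring R] [Nontrivial R]
    (S : Set (σ →₀ ℕ)) :
    (Ideal.span ((fun a => monomial a (1 : R)) '' S)).restrictScalars R =
      restrictSupport R
        {a | monomial a (1 : R) ∈ Ideal.span ((fun a => monomial a (1 : R)) '' S)} := by
  classical
  ext p
  simp only [Submodule.restrictScalars_mem, mem_restrictSupport_iff, mem_ideal_span_monomial_image,
    support_monomial, one_ne_zero, if_false, Finset.mem_singleton, forall_eq, Set.subset_def,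
    Finset.mem_coe, Set.mem_ofPred_eq]

theorem isCompl_restrictSupport_compl [CommSemiring R] (U : Set (σ →₀ ℕ)) :
    IsCompl (restrictSupport R U) (restrictSupport R Uᶜ) := by
  refine ⟨Submodule.disjoint_def.2 fun p hU hUc => ?_, codisjoint_iff.2 ?_⟩
  · rw [mem_restrictSupport_iff] at hU hUc
    rw [← support_eq_empty, ← Finset.coe_eq_empty, ← Set.subset_empty_iff]
    exact fun m hm => hUc hm (hU hm)
  · rw [restrictSupport_eq_span, restrictSupport_eq_span, ← Submodule.span_union,
      ← Set.image_union, Set.union_compl_self, Set.image_univ]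
    simpa using (basisMonomials σ R).span_eq

theorem finrank_quotient_eq_ncard_compl [CommRing R] [Nontrivial R] {I : Ideal (MvPolynomial σ R)}
    {U : Set (σ →₀ ℕ)} (hI : I.restrictScalars R = restrictSupport R U) :
    Module.finrank R (MvPolynomial σ R ⧸ I) = Uᶜ.ncard := by
  calc Module.finrank R (MvPolynomial σ R ⧸ I)
      = Module.finrank R (MvPolynomial σ R ⧸ I.restrictScalars R) :=
        (Submodule.Quotient.restrictScalarsEquiv R I).finrank_eq.symm
    _ = Module.finrank R (restrictSupport R Uᶜ) := by
        rw [hI]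
        exact (Submodule.quotientEquivOfIsCompl _ _ (isCompl_restrictSupport_compl U)).finrank_eq
    _ = Uᶜ.ncard := Module.finrank_eq_nat_card_basis (basisRestrictSupport R Uᶜ)

end MonomialIdeals

theorem statement_6_general (F : Type) [Field F] (n K : ℕ) (hK : 1 ≤ K)
    (I : Ideal (MvPolynomial (Fin n) F)) (hI : IsMonomialIdeal I)
    (hdim : Module.finrank F (MvPolynomial (Fin n) F ⧸ I) = K) :
    (minGenSet I).ncard ≤ (n - 1) * K + 1 := by
  have hI_supported : I.restrictScalars F = restrictSupport F {a | monomial a (1 : F) ∈ I} := by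
    obtain ⟨S, rfl⟩ := hI
    exact restrictScalars_span_monomial_image S
  have hstandard : {a | monomial a (1 : F) ∈ I}ᶜ.ncard = K :=
    (finrank_quotient_eq_ncard_compl hI_supported).symm.trans hdim
  -- `ncard` of an infinite set is `0`, so `1 ≤ K` is what makes the standard monomials finite.
  have hfin : {a | monomial a (1 : F) ∈ I}ᶜ.Finite := Set.finite_of_ncard_pos (by omega)
  calc (minGenSet I).ncard
      ≤ (Nat.card (Fin n) - 1) * {a | monomial a (1 : F) ∈ I}ᶜ.ncard + 1 :=
        ncard_minimalExponents_le (isUpperSet_setOf_monomial_mem I) hfin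
    _ = (n - 1) * K + 1 := by rw [Nat.card_fin, hstandard]

/-- If `I` is a nonzero monomial ideal with `dim F[X]/I = K ≥ 1`, its minimal monomial
generating set `G` satisfies `|G| ≤ (n-1)K + 1`. -/
theorem statement_6 (F : Type) [Field F] (n K : ℕ) (hn : 1 ≤ n) (hK : 1 ≤ K)
    (I : Ideal (MvPolynomial (Fin n) F)) (hI : IsMonomialIdeal I) (hne : I ≠ ⊥)
    (hdim : Module.finrank F (MvPolynomial (Fin n) F ⧸ I) = K) :
    (minGenSet I).ncard ≤ (n - 1) * K + 1 :=
  statement_6_general F n K hK I hI hdim
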